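/- Multi-collision QCQP correctness: let M^{(1)},…,M^{(p)} ∈ ℝ^{hw×m} be projection matrices (one per victim) and T^{(1)},…,T^{(p)} ∈ {0,1}^m the corresponding templates. Suppose an image X : Fin h × Fin w → ℝ and an array Y satisfy Y(i,j) ≥ 0 and Y(i,j)² = Gx(i,j)² + Gy(i,j)² for all (i,j), and for every ℓ ∈ {1,…,p}: Y_flat·M^{(ℓ)}_j < 0 for all j with T^{(ℓ)}_j = 0 and Y_flat·M^{(ℓ)}_j ≥ 0 for all j with T^{(ℓ)}_j = 1. Then for every ℓ, the URP-Sobel template of X under M^{(ℓ)} equals T^{(ℓ)}; that is, X is a p-template fingerprint preimage of (T^{(1)},…,T^{(p)}) with respect to (M^{(1)},…,M^{(p)}). -/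
import Mathlib


noncomputable section

/-- Extension of an image by zeros outside its domain. -/
def extZ {h w : ℕ} (X : Fin h × Fin w → ℝ) (i j : ℤ) : ℝ :=
  if hij : 0 ≤ i ∧ i < (h : ℤ) ∧ 0 ≤ j ∧ j < (w : ℤ) then
    X (⟨i.toNat, by omega⟩, ⟨j.toNat, by omega⟩)
  else 0

/-- Horizontal Sobel gradient. -/
def sobelGx {h w : ℕ} (X : Fin h × Fin w → ℝ) (i j : ℤ) : ℝ :=
  extZ X (i - 1) (j - 1) + 2 * extZ X i (j - 1) + extZ X (i + 1) (j - 1)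
    - extZ X (i - 1) (j + 1) - 2 * extZ X i (j + 1) - extZ X (i + 1) (j + 1)

/-- Vertical Sobel gradient. -/
def sobelGy {h w : ℕ} (X : Fin h × Fin w → ℝ) (i j : ℤ) : ℝ :=
  extZ X (i - 1) (j - 1) + 2 * extZ X (i - 1) j + extZ X (i - 1) (j + 1)
    - extZ X (i + 1) (j - 1) - 2 * extZ X (i + 1) j - extZ X (i + 1) (j + 1)

/-- The Sobel feature of an image: `S(i,j) = √(Gx(i,j)² + Gy(i,j)²)`. -/
def sobel {h w : ℕ} (X : Fin h × Fin w → ℝ) : Fin h × Fin w → ℝ :=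
  fun p => Real.sqrt (sobelGx X (p.1 : ℤ) (p.2 : ℤ) ^ 2 + sobelGy X (p.1 : ℤ) (p.2 : ℤ) ^ 2)

/-- Row-by-row flattening of an `h × w` array into a vector of `ℝ^{hw}`. -/
def flatten {h w : ℕ} (f : Fin h × Fin w → ℝ) : Fin (h * w) → ℝ :=
  fun k => f (finProdFinEquiv.symm k)

/-- The binary template of a feature vector `F ∈ ℝ^n` under a projection matrix
`M ∈ ℝ^{n×m}`: coordinate `i` is `1` (`true`) iff the dot product `F·M_i ≥ 0`. -/
def template {n m : ℕ} (F : Fin n → ℝ) (M : Matrix (Fin n) (Fin m) ℝ) :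
    Fin m → Bool :=
  fun i => decide (0 ≤ ∑ k, F k * M k i)

/-- Multi-collision QCQP correctness: if `X`, `Y` satisfy the merged Sobel
constraints and, for every victim `ℓ`, the flattening of `Y` satisfies the sign
constraints of template `T ℓ` under matrix `M ℓ`, then for every `ℓ` the
URP-Sobel template of `X` under `M ℓ` equals `T ℓ` (i.e. `X` is a `p`-template
fingerprint preimage of `(T 1, …, T p)` w.r.t. `(M 1, …, M p)`). -/
theorem multi_collision_qcqp_correct
    {h w m p : ℕ}
    (M : Fin p → Matrix (Fin (h * w)) (Fin m) ℝ)
    (T : Fin p → Fin m → Bool)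
    (X Y : Fin h × Fin w → ℝ)
    (hY0 : ∀ q, 0 ≤ Y q)
    (hYsq : ∀ q : Fin h × Fin w,
      Y q ^ 2 = sobelGx X (q.1 : ℤ) (q.2 : ℤ) ^ 2 + sobelGy X (q.1 : ℤ) (q.2 : ℤ) ^ 2)
    (hK1 : ∀ ℓ, ∀ j, T ℓ j = false → ∑ k, flatten Y k * M ℓ k j < 0)
    (hK2 : ∀ ℓ, ∀ j, T ℓ j = true → 0 ≤ ∑ k, flatten Y k * M ℓ k j) :
    ∀ ℓ, template (flatten (sobel X)) (M ℓ) = T ℓ := by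
  have hS : sobel X = Y := by
    funext q
    have := hYsq q
    rw [sobel, ← this, Real.sqrt_sq (hY0 q)]
  intro ℓ
  funext j
  rw [hS, template]
  cases hT : T ℓ j with
  | false => simpa using not_le.2 (hK1 ℓ j hT)
  | true => simpa using hK2 ℓ j hT
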